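/- arXiv:0903.3519 — 5 statements merged into one kernel-verified Lean document; each statement's English description precedes it below -/
import Mathlib

section
/- If F is a Finsler metric on a manifold M whose square G = F^2 is twice continuously differentiable on the whole tangent bundle TM (including the zero section), then G is a quadratic form on each fiber, i.e., F is the norm of a Riemannian metric. -/
private lemma upd_zero {α : Type*} (a b x : α) :
    Function.update ![a, b] 0 x = ![x, b] := by
  funext i; fin_cases i <;> simp

private lemma upd_one {α : Type*} (a b x : α) :
    Function.update ![a, b] 1 x = ![a, x] := by
  funext i; fin_cases i <;> simp

private lemma pair_const {α : Type*} (y : α) : ![y, y] = fun _ : Fin 2 => y := by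
  funext i; fin_cases i <;> simp

/-- The key computation: the second fiberwise derivative of `G = F²` along the ray
through `y`, evaluated at any point `t • y` with `t ≥ 0`, equals `2 F(y)²`. -/
private lemma key_deriv (n : ℕ) (F : (Fin n → ℝ) → ℝ)
    (hhom : ∀ (y : Fin n → ℝ) (c : ℝ), 0 < c → F (c • y) = c * F y)
    (hC2 : ContDiff ℝ 2 (fun y => F y ^ 2)) (y : Fin n → ℝ) :
    ∀ t : ℝ, 0 ≤ t →
      iteratedFDeriv ℝ 2 (fun z => F z ^ 2) (t • y) ![y, y] = 2 * F y ^ 2 := by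
  set G : (Fin n → ℝ) → ℝ := fun z => F z ^ 2 with hG
  set L : ℝ →L[ℝ] (Fin n → ℝ) := (ContinuousLinearMap.id ℝ ℝ).smulRight y with hL
  have hLapp : ∀ t : ℝ, L t = t • y := fun t => rfl
  set φ : ℝ → ℝ := G ∘ L with hφdef
  have hφ : ContDiff ℝ 2 φ := hC2.comp L.contDiff
  -- rewrite the fiberwise second derivative as the 1D second derivative of φ
  have hrw : ∀ t : ℝ, iteratedFDeriv ℝ 2 G (t • y) ![y, y] = deriv (deriv φ) t := by
    intro t
    have hc := L.iteratedFDeriv_comp_right hC2 t (i := 2) (by norm_num)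
    have h1 : iteratedDeriv 2 φ t = iteratedFDeriv ℝ 2 φ t fun _ => (1 : ℝ) :=
      iteratedDeriv_eq_iteratedFDeriv
    have h2 : iteratedDeriv 2 φ t = deriv (deriv φ) t := by
      rw [iteratedDeriv_succ, iteratedDeriv_one]
    rw [← h2, h1, hc, ContinuousMultilinearMap.compContinuousLinearMap_apply]
    congr 1
    rw [pair_const]
    funext i
    exact (show L 1 = y by rw [hLapp, one_smul]).symm
  -- on the positive ray, φ t = t² * F(y)²
  have hφval : ∀ t ∈ Set.Ioi (0 : ℝ), φ t = t ^ 2 * F y ^ 2 := by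
    intro t ht
    show G (L t) = t ^ 2 * F y ^ 2
    rw [hLapp, hG]
    simp only
    rw [hhom y t ht]
    ring
  -- first derivative on the positive ray
  have hd1 : ∀ t ∈ Set.Ioi (0 : ℝ), deriv φ t = 2 * t * F y ^ 2 := by
    intro t ht
    have hev : φ =ᶠ[nhds t] fun s => s ^ 2 * F y ^ 2 := by
      filter_upwards [isOpen_Ioi.mem_nhds ht] with s hs using hφval s hs
    rw [hev.deriv_eq]
    have : HasDerivAt (fun s : ℝ => s ^ 2 * F y ^ 2) (2 * t ^ 1 * F y ^ 2) t := by
      simpa using (hasDerivAt_pow 2 t).mul_const (F y ^ 2)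
    simpa using this.deriv
  -- second derivative on the positive ray
  have hd2 : ∀ t ∈ Set.Ioi (0 : ℝ), deriv (deriv φ) t = 2 * F y ^ 2 := by
    intro t ht
    have hev : deriv φ =ᶠ[nhds t] fun s => 2 * s * F y ^ 2 := by
      filter_upwards [isOpen_Ioi.mem_nhds ht] with s hs using hd1 s hs
    rw [hev.deriv_eq]
    have : HasDerivAt (fun s : ℝ => 2 * s * F y ^ 2) (2 * F y ^ 2) t := by
      simpa using ((hasDerivAt_id t).const_mul 2).mul_const (F y ^ 2)
    simpa using this.deriv
  -- continuity of the second derivative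
  have hφ' : ContDiff ℝ ((1 : ℕ∞) + 1) φ := by exact_mod_cast hφ
  have hdc : ContDiff ℝ 1 (deriv φ) := (contDiff_succ_iff_deriv.mp hφ').2.2
  have hψc : Continuous (deriv (deriv φ)) := hdc.continuous_deriv le_rfl
  -- value at 0 by one-sided limits
  have hzero : deriv (deriv φ) 0 = 2 * F y ^ 2 := by
    have hA : Filter.Tendsto (deriv (deriv φ)) (nhdsWithin 0 (Set.Ioi 0))
        (nhds (deriv (deriv φ) 0)) := (hψc.tendsto 0).mono_left nhdsWithin_le_nhds
    have hB : Filter.Tendsto (deriv (deriv φ)) (nhdsWithin 0 (Set.Ioi 0))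
        (nhds (2 * F y ^ 2)) := by
      refine Filter.Tendsto.congr' ?_ tendsto_const_nhds
      filter_upwards [self_mem_nhdsWithin] with s hs using (hd2 s hs).symm
    exact tendsto_nhds_unique hA hB
  intro t ht
  rw [hrw t]
  rcases eq_or_lt_of_le ht with h | h
  · rw [← h]; exact hzero
  · exact hd2 t h

/-- Warner's theorem (fiberwise model on ℝⁿ): if `F` is a Finsler (Minkowski) metric,
i.e. continuous, nonnegative, smooth off the origin, positively 1-homogeneous, with
positive definite fiberwise Hessian of `F²` away from `0`, and if moreover `G = F²`
is twice continuously differentiable on the whole space (including the origin),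
then `G` is a quadratic form, i.e. `F` is the norm of a Riemannian (inner product) metric. -/
theorem warner_C2_implies_riemannian (n : ℕ) (F : (Fin n → ℝ) → ℝ)
    (hcont : Continuous F) (hnonneg : ∀ y, 0 ≤ F y)
    (hsmooth : ContDiffOn ℝ (⊤ : ℕ∞) F {y : Fin n → ℝ | y ≠ 0})
    (hhom : ∀ (y : Fin n → ℝ) (c : ℝ), 0 < c → F (c • y) = c * F y)
    (hposdef : ∀ y : Fin n → ℝ, y ≠ 0 → ∀ v : Fin n → ℝ, v ≠ 0 →
      0 < iteratedFDeriv ℝ 2 (fun z => F z ^ 2) y ![v, v])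
    (hC2 : ContDiff ℝ 2 (fun y => F y ^ 2)) :
    ∃ B : LinearMap.BilinForm ℝ (Fin n → ℝ),
      (∀ u v, B u v = B v u) ∧ (∀ y, y ≠ 0 → 0 < B y y) ∧
      ∀ y, F y ^ 2 = B y y := by
  set M := iteratedFDeriv ℝ 2 (fun z => F z ^ 2) 0 with hM
  -- value of M on the diagonal
  have hkey : ∀ y : Fin n → ℝ, M ![y, y] = 2 * F y ^ 2 := by
    intro y
    have := key_deriv n F hhom hC2 y 0 le_rfl
    simpa [zero_smul] using this
  -- positivity of F away from zero
  have hpos : ∀ y : Fin n → ℝ, y ≠ 0 → 0 < F y ^ 2 := by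
    intro y hy
    have h1 := key_deriv n F hhom hC2 y 1 zero_le_one
    rw [one_smul] at h1
    have := hposdef y hy y hy
    rw [h1] at this
    linarith
  -- multilinearity of M
  have hadd0 : ∀ a a' b, M ![a + a', b] = M ![a, b] + M ![a', b] := by
    intro a a' b
    have := M.map_update_add ![a, b] 0 a a'
    rwa [upd_zero, upd_zero, upd_zero] at this
  have hadd1 : ∀ a b b', M ![a, b + b'] = M ![a, b] + M ![a, b'] := by
    intro a b b'
    have := M.map_update_add ![a, b] 1 b b'
    rwa [upd_one, upd_one, upd_one] at this
  have hsmul0 : ∀ (c : ℝ) a b, M ![c • a, b] = c * M ![a, b] := by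
    intro c a b
    have := M.map_update_smul ![a, b] 0 c a
    rwa [upd_zero, upd_zero, smul_eq_mul] at this
  have hsmul1 : ∀ (c : ℝ) a b, M ![a, c • b] = c * M ![a, b] := by
    intro c a b
    have := M.map_update_smul ![a, b] 1 c b
    rwa [upd_one, upd_one, smul_eq_mul] at this
  refine ⟨LinearMap.mk₂ ℝ (fun u v => (M ![u, v] + M ![v, u]) / 4)
    (fun u u' v => by show (M ![u + u', v] + M ![v, u + u']) / 4 = _; rw [hadd0, hadd1]; ring)
    (fun c u v => by show (M ![c • u, v] + M ![v, c • u]) / 4 = _; rw [hsmul0, hsmul1, smul_eq_mul]; ring)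
    (fun u v v' => by show (M ![u, v + v'] + M ![v + v', u]) / 4 = _; rw [hadd1, hadd0]; ring)
    (fun c u v => by show (M ![u, c • v] + M ![c • v, u]) / 4 = _; rw [hsmul1, hsmul0, smul_eq_mul]; ring), ?_, ?_, ?_⟩
  · intro u v
    simp only [LinearMap.mk₂_apply]
    ring
  · intro y hy
    simp only [LinearMap.mk₂_apply]
    have := hkey y
    have h2 := hpos y hy
    rw [this]
    linarith
  · intro y
    simp only [LinearMap.mk₂_apply]
    rw [hkey y]
    ring
end

section
/- Let H be a Hilbert space and A: H → H a bounded self-adjoint invertible operator. For u ∈ H ∖ {0}, consider the Cauchy problem ψ'(s) = -Aψ(s)/‖Aψ(s)‖, ψ(0) = u. Then the solution exists for all |s| < ‖u‖ and satisfies ‖ψ(s) - u‖ ≤ |s| and ‖ψ(s)‖ ≥ ‖u‖ - |s|. -/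
/-!
The solution is a reparametrisation of the linear flow `γ t = exp (-t A) u`, which never vanishes.
Since `‖A x‖ ≥ C ‖x‖`, its speed `‖A (γ t)‖` is positive, so the signed arclength `τ` of `γ` is
strictly increasing with positive derivative, and `γ ∘ τ⁻¹` has unit speed in the direction
`-A γ`. The displacement of `γ` is bounded by its arclength, `‖γ t - u‖ ≤ |τ t|`, which gives both
estimates; it also bounds the speed below by `C (‖u‖ - |τ t|)`, so `τ` cannot stall before reaching
`±‖u‖` and `τ⁻¹` is defined on `(-‖u‖, ‖u‖)`.
-/

open Set Filter Topology Function

theorem StrictMono.hasDerivAt_invFun {f : ℝ → ℝ} {f' s : ℝ} (hf : StrictMono f)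
    (hs : range f ∈ 𝓝 s) (hderiv : HasDerivAt f f' (invFun f s)) (hf' : f' ≠ 0) :
    HasDerivAt (invFun f) f'⁻¹ s := by
  have hright : ∀ y ∈ range f, f (invFun f y) = y := fun y hy => invFun_eq hy
  have hmono : MonotoneOn (invFun f) (range f) := fun y₁ hy₁ y₂ hy₂ hy => by
    rw [← hf.le_iff_le, hright y₁ hy₁, hright y₂ hy₂]
    exact hy
  have himage : invFun f '' range f = univ :=
    eq_univ_of_forall fun t => ⟨f t, mem_range_self t, leftInverse_invFun hf.injective t⟩
  have hcont : ContinuousAt (invFun f) s :=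
    continuousAt_of_monotoneOn_of_image_mem_nhds hmono hs (himage ▸ univ_mem)
  exact hderiv.of_local_left_inverse hcont hf' (eventually_of_mem hs hright)

theorem exists_le_of_mul_sub_abs_le_deriv {τ g : ℝ → ℝ} {c R s : ℝ} (hc : 0 < c)
    (hmono : Monotone τ) (hτ0 : τ 0 = 0) (hderiv : ∀ t, HasDerivAt τ (g t) t)
    (hspeed : ∀ t, c * (R - |τ t|) ≤ g t) (hs : s < R) : ∃ t, s ≤ τ t := by
  -- Otherwise `τ` would grow at rate at least `c (R - s) > 0` on `[0, ∞)` while staying below `s`.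
  by_contra! hlt
  have hpos : 0 < s := hτ0 ▸ hlt 0
  have hδ : 0 < c * (R - s) := mul_pos hc (sub_pos.mpr hs)
  have hgrowth : c * (R - s) * (s / (c * (R - s)) - 0) ≤ τ (s / (c * (R - s))) - τ 0 := by
    refine (convex_Ici 0).mul_sub_le_image_sub_of_le_deriv
      (fun t _ => (hderiv t).continuousAt.continuousWithinAt)
      (fun t _ => (hderiv t).differentiableAt.differentiableWithinAt) (fun t ht => ?_)
      0 (mem_Ici.mpr le_rfl) _ (mem_Ici.mpr (div_pos hpos hδ).le) (div_pos hpos hδ).le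
    rw [interior_Ici] at ht
    have hτt : 0 ≤ τ t := hτ0 ▸ hmono (le_of_lt ht)
    rw [(hderiv t).deriv]
    calc c * (R - s) ≤ c * (R - |τ t|) := by
          gcongr
          rw [abs_of_nonneg hτt]
          exact (hlt t).le
      _ ≤ g t := hspeed t
  rw [sub_zero, mul_div_cancel₀ _ hδ.ne', hτ0, sub_zero] at hgrowth
  exact (hlt _).not_ge hgrowth

theorem Ioo_subset_range_of_mul_sub_abs_le_deriv {τ g : ℝ → ℝ} {c R : ℝ} (hc : 0 < c)
    (hmono : Monotone τ) (hτ0 : τ 0 = 0) (hderiv : ∀ t, HasDerivAt τ (g t) t)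
    (hspeed : ∀ t, c * (R - |τ t|) ≤ g t) : Ioo (-R) R ⊆ range τ := by
  intro s ⟨hRs, hsR⟩
  have hcont : Continuous τ := continuous_iff_continuousAt.mpr fun t => (hderiv t).continuousAt
  have hbelow : ∃ t, -s ≤ -τ (-t) := by
    refine exists_le_of_mul_sub_abs_le_deriv (τ := fun t => -τ (-t)) (g := fun t => g (-t))
      (R := R) hc (fun a b hab => neg_le_neg (hmono (neg_le_neg hab))) (by simp [hτ0])
      (fun t => ?_) (fun t => ?_) (by linarith)
    · simpa using ((hderiv (-t)).comp t (hasDerivAt_neg t)).fun_neg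
    · simpa using hspeed (-t)
  obtain ⟨t₁, ht₁⟩ := hbelow
  exact mem_range_of_exists_le_of_exists_ge hcont ⟨-t₁, by linarith⟩
    (exists_le_of_mul_sub_abs_le_deriv hc hmono hτ0 hderiv hspeed hsR)

section Arclength

variable {E : Type*} [NormedAddCommGroup E]

noncomputable def signedArclength (γ' : ℝ → E) (t : ℝ) : ℝ := ∫ r in (0 : ℝ)..t, ‖γ' r‖

variable {γ γ' : ℝ → E}

@[simp]
theorem signedArclength_zero : signedArclength γ' 0 = 0 := intervalIntegral.integral_same

theorem hasDerivAt_signedArclength (hγ' : Continuous γ') (t : ℝ) :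
    HasDerivAt (signedArclength γ') ‖γ' t‖ t :=
  (hγ'.norm.integral_hasStrictDerivAt 0 t).hasDerivAt

theorem strictMono_signedArclength (hγ' : Continuous γ') (hne : ∀ t, γ' t ≠ 0) :
    StrictMono (signedArclength γ') :=
  strictMono_of_hasDerivAt_pos (hasDerivAt_signedArclength hγ') fun t => norm_pos_iff.mpr (hne t)

variable [NormedSpace ℝ E]

theorem hasDerivAt_comp_invFun_signedArclength (hγ : ∀ t, HasDerivAt γ (γ' t) t)
    (hγ' : Continuous γ') (hne : ∀ t, γ' t ≠ 0) {s : ℝ} (hs : range (signedArclength γ') ∈ 𝓝 s) :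
    HasDerivAt (γ ∘ invFun (signedArclength γ'))
      (‖γ' (invFun (signedArclength γ') s)‖⁻¹ • γ' (invFun (signedArclength γ') s)) s :=
  (hγ _).scomp s <| (strictMono_signedArclength hγ' hne).hasDerivAt_invFun hs
    (hasDerivAt_signedArclength hγ' _) (norm_ne_zero_iff.mpr (hne _))

variable [CompleteSpace E]

theorem norm_sub_le_abs_signedArclength (hγ : ∀ t, HasDerivAt γ (γ' t) t)
    (hγ' : Continuous γ') (t : ℝ) : ‖γ t - γ 0‖ ≤ |signedArclength γ' t| := by
  rw [← intervalIntegral.integral_eq_sub_of_hasDerivAt (fun r _ => hγ r)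
    (hγ'.intervalIntegrable 0 t)]
  exact intervalIntegral.norm_integral_le_abs_integral_norm

end Arclength

section LinearFlow

variable {E : Type*} [NormedAddCommGroup E] [NormedSpace ℝ E] [CompleteSpace E]

theorem hasDerivAt_exp_smul_apply (B : E →L[ℝ] E) (u : E) (t : ℝ) :
    HasDerivAt (fun t : ℝ => NormedSpace.exp (t • B) u) (B (NormedSpace.exp (t • B) u)) t := by
  simpa using (hasDerivAt_exp_smul_const' B t).clm_apply (hasDerivAt_const t u)

theorem exp_smul_apply_ne_zero (B : E →L[ℝ] E) (t : ℝ) {u : E} (hu : u ≠ 0) :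
    NormedSpace.exp (t • B) u ≠ 0 := by
  obtain ⟨v, hv⟩ := NormedSpace.isUnit_exp_of_mem_ball (𝕂 := ℝ) (x := t • B)
    ((NormedSpace.expSeries_radius_eq_top ℝ (E →L[ℝ] E)).symm ▸ edist_lt_top _ _)
  rw [← hv]
  exact (ContinuousLinearEquiv.unitsEquiv ℝ E v).map_ne_zero_iff.mpr hu

end LinearFlow

open RealInnerProductSpace

theorem normalized_gradient_flow_exists_general {H : Type*}
    [NormedAddCommGroup H] [InnerProductSpace ℝ H] [CompleteSpace H]
    (A : H →L[ℝ] H)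
    (C : ℝ) (hC : 0 < C) (hinv : ∀ ψ : H, C * ‖ψ‖ ≤ ‖A ψ‖)
    (u : H) (hu : u ≠ 0) :
    ∃ ψ : ℝ → H, ψ 0 = u ∧ ∀ s : ℝ, |s| < ‖u‖ →
      HasDerivAt ψ (-(‖A (ψ s)‖⁻¹ • A (ψ s))) s ∧
      ‖ψ s - u‖ ≤ |s| ∧ ‖u‖ - |s| ≤ ‖ψ s‖ := by
  set γ : ℝ → H := fun t => NormedSpace.exp (t • -A) u
  have hγ (t : ℝ) : HasDerivAt γ (-A (γ t)) t := hasDerivAt_exp_smul_apply (-A) u t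
  have hγ' : Continuous fun t => -A (γ t) :=
    (A.continuous.comp (continuous_iff_continuousAt.mpr fun t => (hγ t).continuousAt)).neg
  have hne (t : ℝ) : -A (γ t) ≠ 0 := neg_ne_zero.mpr <| norm_pos_iff.mp <|
    (mul_pos hC (norm_pos_iff.mpr (exp_smul_apply_ne_zero (-A) t hu))).trans_le (hinv (γ t))
  have hγ0 : γ 0 = u := by simp [γ]
  set τ := signedArclength fun t => -A (γ t)
  have hdist (t : ℝ) : ‖γ t - u‖ ≤ |τ t| := hγ0 ▸ norm_sub_le_abs_signedArclength hγ hγ' t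
  have hlow (t : ℝ) : ‖u‖ - |τ t| ≤ ‖γ t‖ := by
    linarith [norm_le_norm_add_norm_sub (γ t) u, hdist t]
  have hrange : Ioo (-‖u‖) ‖u‖ ⊆ range τ :=
    Ioo_subset_range_of_mul_sub_abs_le_deriv hC (strictMono_signedArclength hγ' hne).monotone
      signedArclength_zero (hasDerivAt_signedArclength hγ') fun t =>
        (mul_le_mul_of_nonneg_left (hlow t) hC.le).trans ((hinv (γ t)).trans_eq (norm_neg _).symm)
  have hτ0 : invFun τ 0 = 0 := by
    simpa [τ] using leftInverse_invFun (strictMono_signedArclength hγ' hne).injective 0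
  refine ⟨γ ∘ invFun τ, by rw [comp_apply, hτ0, hγ0], fun s hs => ?_⟩
  have hs' : s ∈ Ioo (-‖u‖) ‖u‖ := abs_lt.mp hs
  have hτσ : τ (invFun τ s) = s := invFun_eq (hrange hs')
  refine ⟨?_, (hdist _).trans_eq (congrArg abs hτσ), by simpa [hτσ] using hlow (invFun τ s)⟩
  convert hasDerivAt_comp_invFun_signedArclength hγ hγ' hne
    (mem_of_superset (isOpen_Ioo.mem_nhds hs') hrange) using 1
  simp [τ, smul_neg]

/-- For a bounded self-adjoint invertible operator `A` on a Hilbert space and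
`u ≠ 0`, the Cauchy problem `ψ' = -Aψ/‖Aψ‖`, `ψ(0) = u`, has a solution defined
for all `|s| < ‖u‖`, which satisfies `‖ψ(s) - u‖ ≤ |s|` and `‖ψ(s)‖ ≥ ‖u‖ - |s|`. -/
theorem normalized_gradient_flow_exists {H : Type*}
    [NormedAddCommGroup H] [InnerProductSpace ℝ H] [CompleteSpace H]
    (A : H →L[ℝ] H) (hsa : ∀ u v : H, ⟪A u, v⟫ = ⟪u, A v⟫)
    (C : ℝ) (hC : 0 < C) (hinv : ∀ ψ : H, C * ‖ψ‖ ≤ ‖A ψ‖)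
    (u : H) (hu : u ≠ 0) :
    ∃ ψ : ℝ → H, ψ 0 = u ∧ ∀ s : ℝ, |s| < ‖u‖ →
      HasDerivAt ψ (-(‖A (ψ s)‖⁻¹ • A (ψ s))) s ∧
      ‖ψ s - u‖ ≤ |s| ∧ ‖u‖ - |s| ≤ ‖ψ s‖ :=
  normalized_gradient_flow_exists_general A C hC hinv u hu
end

section
/- Let A be a bounded self-adjoint operator on a Hilbert space H with ‖Aψ‖ ≥ C‖ψ‖ for some C > 0 (i.e., A invertible), let F₂(u) = (1/2)⟨Au,u⟩, and let ψ(s,u) solve ψ' = -Aψ/‖Aψ‖ with ψ(0,u)=u. Then for 0 ≤ t < ‖u‖: F₂(u) - F₂(ψ(t,u)) = ∫₀^t ‖Aψ(s,u)‖ ds ≥ C(‖u‖ t - t²/2). In particular t ↦ F₂(ψ(t,u)) is strictly decreasing. -/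
/-!
The flow has unit speed, so `‖ψ t‖ ≥ ‖u‖ - t` and hence `‖A (ψ t)‖ ≥ C (‖u‖ - t)`, which is
positive for `t < ‖u‖`. By symmetry of `A`, `d/dt F₂(ψ t) = ⟪A (ψ t), ψ' t⟫ = -‖A (ψ t)‖`;
integrating this identity and the lower bound gives both claims.
-/

open RealInnerProductSpace Set intervalIntegral

section

variable {H : Type*} [NormedAddCommGroup H] [InnerProductSpace ℝ H]

lemma norm_neg_inv_norm_smul_le_one (v : H) : ‖-(‖v‖⁻¹ • v)‖ ≤ 1 := by
  simpa [norm_neg] using inv_norm_smul_mem_unitClosedBall v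

lemma real_inner_inv_norm_smul_self (v : H) : ⟪v, ‖v‖⁻¹ • v⟫ = ‖v‖ := by
  rcases eq_or_ne v 0 with rfl | hv
  · simp
  · rw [real_inner_smul_right, real_inner_self_eq_norm_sq]
    field_simp

lemma norm_sub_le_norm_of_norm_derivWithin_le_one {f f' : ℝ → H} {a b : ℝ} (hab : a ≤ b)
    (hf : ∀ x ∈ Icc a b, HasDerivWithinAt f (f' x) (Icc a b) x)
    (hf' : ∀ x ∈ Icc a b, ‖f' x‖ ≤ 1) : ‖f a‖ - (b - a) ≤ ‖f b‖ := by
  have h := (convex_Icc a b).norm_image_sub_le_of_norm_hasDerivWithin_le hf hf'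
    (left_mem_Icc.mpr hab) (right_mem_Icc.mpr hab)
  rw [one_mul, Real.norm_of_nonneg (sub_nonneg.mpr hab)] at h
  linarith [norm_sub_norm_le (f a) (f b), norm_sub_rev (f a) (f b)]

lemma HasDerivAt.half_inner_apply_self {A : H →L[ℝ] H} (hA : (A : H →ₗ[ℝ] H).IsSymmetric)
    {ψ : ℝ → H} {v : H} {s : ℝ} (h : HasDerivAt ψ v s) :
    HasDerivAt (fun s ↦ (1/2 : ℝ) * ⟪A (ψ s), ψ s⟫) ⟪A (ψ s), v⟫ s := by
  have hAψ : HasDerivAt (fun s ↦ A (ψ s)) (A v) s := A.hasFDerivAt.comp_hasDerivAt s h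
  refine ((hAψ.inner ℝ h).const_mul (1/2 : ℝ)).congr_deriv ?_
  rw [show ⟪A v, ψ s⟫ = ⟪A (ψ s), v⟫ from (hA v (ψ s)).trans (real_inner_comm _ _)]
  ring

variable {A : H →L[ℝ] H} {ψ : ℝ → H} {a b : ℝ}

/-- No `A (ψ s) ≠ 0` is needed: with `0⁻¹ = 0` the velocity vanishes exactly where
`A (ψ s)` does. -/
lemma hasDerivAt_half_inner_apply_self_flow (hA : (A : H →ₗ[ℝ] H).IsSymmetric) {s : ℝ}
    (hψ : HasDerivAt ψ (-(‖A (ψ s)‖⁻¹ • A (ψ s))) s) :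
    HasDerivAt (fun x ↦ (1/2 : ℝ) * ⟪A (ψ x), ψ x⟫) (-‖A (ψ s)‖) s := by
  simpa only [inner_neg_right, real_inner_inv_norm_smul_self] using hψ.half_inner_apply_self hA

lemma norm_sub_le_norm_flow (hab : a ≤ b)
    (hflow : ∀ s ∈ Icc a b, HasDerivAt ψ (-(‖A (ψ s)‖⁻¹ • A (ψ s))) s) :
    ‖ψ a‖ - (b - a) ≤ ‖ψ b‖ :=
  norm_sub_le_norm_of_norm_derivWithin_le_one hab (fun s hs ↦ (hflow s hs).hasDerivWithinAt)
    (fun _ _ ↦ norm_neg_inv_norm_smul_le_one _)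

lemma continuousOn_norm_apply_flow
    (hflow : ∀ s ∈ Icc a b, HasDerivAt ψ (-(‖A (ψ s)‖⁻¹ • A (ψ s))) s) :
    ContinuousOn (fun s ↦ ‖A (ψ s)‖) (Icc a b) := fun s hs ↦
  (A.continuous.continuousAt.comp (hflow s hs).continuousAt).norm.continuousWithinAt

lemma half_inner_sub_eq_integral_flow (hA : (A : H →ₗ[ℝ] H).IsSymmetric) (hab : a ≤ b)
    (hflow : ∀ s ∈ Icc a b, HasDerivAt ψ (-(‖A (ψ s)‖⁻¹ • A (ψ s))) s) :
    (1/2 : ℝ) * ⟪A (ψ a), ψ a⟫ - (1/2 : ℝ) * ⟪A (ψ b), ψ b⟫ = ∫ s in a..b, ‖A (ψ s)‖ := by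
  have hint : IntervalIntegrable (fun s ↦ -‖A (ψ s)‖) MeasureTheory.volume a b :=
    ((continuousOn_norm_apply_flow hflow).intervalIntegrable_of_Icc hab).neg
  have hftc := integral_eq_sub_of_hasDerivAt (fun s hs ↦
    hasDerivAt_half_inner_apply_self_flow hA (hflow s (uIcc_of_le hab ▸ hs))) hint
  rw [integral_neg] at hftc
  linarith

lemma mul_sub_le_norm_apply_flow {C : ℝ} (hC : 0 ≤ C) (hinv : ∀ x : H, C * ‖x‖ ≤ ‖A x‖)
    {t : ℝ} (hflow : ∀ s ∈ Icc 0 t, HasDerivAt ψ (-(‖A (ψ s)‖⁻¹ • A (ψ s))) s) :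
    ∀ s ∈ Icc 0 t, C * (‖ψ 0‖ - s) ≤ ‖A (ψ s)‖ := fun s hs ↦
  calc C * (‖ψ 0‖ - s) ≤ C * ‖ψ s‖ := by
        gcongr
        simpa using norm_sub_le_norm_flow hs.1 fun x hx ↦ hflow x ⟨hx.1, hx.2.trans hs.2⟩
    _ ≤ ‖A (ψ s)‖ := hinv (ψ s)

lemma mul_sub_sq_le_integral_norm_apply_flow {C : ℝ} (hC : 0 ≤ C)
    (hinv : ∀ x : H, C * ‖x‖ ≤ ‖A x‖) {t : ℝ} (ht : 0 ≤ t)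
    (hflow : ∀ s ∈ Icc 0 t, HasDerivAt ψ (-(‖A (ψ s)‖⁻¹ • A (ψ s))) s) :
    C * (‖ψ 0‖ * t - t ^ 2 / 2) ≤ ∫ s in (0:ℝ)..t, ‖A (ψ s)‖ := by
  have hlin : ∫ s in (0:ℝ)..t, C * (‖ψ 0‖ - s) = C * (‖ψ 0‖ * t - t ^ 2 / 2) := by
    rw [integral_const_mul, integral_sub intervalIntegrable_const intervalIntegrable_id,
      integral_const, integral_id, smul_eq_mul]
    ring
  rw [← hlin]
  exact integral_mono_on ht ((by fun_prop : Continuous _).intervalIntegrable _ _)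
    ((continuousOn_norm_apply_flow hflow).intervalIntegrable_of_Icc ht)
    (mul_sub_le_norm_apply_flow hC hinv hflow)

end

theorem quadratic_form_decreases_along_flow_general {H : Type*}
    [NormedAddCommGroup H] [InnerProductSpace ℝ H]
    (A : H →L[ℝ] H) (hsa : ∀ u v : H, ⟪A u, v⟫ = ⟪u, A v⟫)
    (C : ℝ) (hC : 0 < C) (hinv : ∀ ψ : H, C * ‖ψ‖ ≤ ‖A ψ‖)
    (u : H) (ψ : ℝ → H) (hψ0 : ψ 0 = u)
    (hflow : ∀ s : ℝ, |s| < ‖u‖ → HasDerivAt ψ (-(‖A (ψ s)‖⁻¹ • A (ψ s))) s) :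
    (∀ t : ℝ, 0 ≤ t → t < ‖u‖ →
      ((1/2 : ℝ) * ⟪A u, u⟫ - (1/2 : ℝ) * ⟪A (ψ t), ψ t⟫ =
        ∫ s in (0:ℝ)..t, ‖A (ψ s)‖) ∧
      C * (‖u‖ * t - t^2 / 2) ≤ ∫ s in (0:ℝ)..t, ‖A (ψ s)‖) ∧
    (∀ t₁ t₂ : ℝ, 0 ≤ t₁ → t₁ < t₂ → t₂ < ‖u‖ →
      (1/2 : ℝ) * ⟪A (ψ t₂), ψ t₂⟫ < (1/2 : ℝ) * ⟪A (ψ t₁), ψ t₁⟫) := by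
  have hflowOn {a b : ℝ} (ha : 0 ≤ a) (hb : b < ‖u‖) :
      ∀ s ∈ Icc a b, HasDerivAt ψ (-(‖A (ψ s)‖⁻¹ • A (ψ s))) s := fun s hs ↦
    hflow s ((abs_of_nonneg (ha.trans hs.1)).trans_lt (hs.2.trans_lt hb))
  subst hψ0
  refine ⟨fun t ht0 ht ↦ ⟨half_inner_sub_eq_integral_flow hsa ht0 (hflowOn le_rfl ht),
    mul_sub_sq_le_integral_norm_apply_flow hC.le hinv ht0 (hflowOn le_rfl ht)⟩,
    fun t₁ t₂ ht₁ h12 ht₂ ↦ ?_⟩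
  have hdiff := half_inner_sub_eq_integral_flow hsa h12.le (hflowOn ht₁ ht₂)
  have hpos : 0 < ∫ s in t₁..t₂, ‖A (ψ s)‖ :=
    intervalIntegral_pos_of_pos_on
      ((continuousOn_norm_apply_flow (hflowOn ht₁ ht₂)).intervalIntegrable_of_Icc h12.le)
      (fun s hs ↦ (mul_pos hC (by linarith [hs.2])).trans_le
        (mul_sub_le_norm_apply_flow hC.le hinv (hflowOn le_rfl ht₂) s
          ⟨ht₁.trans hs.1.le, hs.2.le⟩))
      h12
  linarith

/-- Along the normalized negative gradient flow `ψ' = -Aψ/‖Aψ‖` of the quadratic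
form `F₂(u) = (1/2)⟨Au,u⟩` of a bounded self-adjoint operator `A` with
`‖Aψ‖ ≥ C‖ψ‖`, `C > 0`, one has for `0 ≤ t < ‖u‖`:
`F₂(u) - F₂(ψ(t)) = ∫₀ᵗ ‖Aψ(s)‖ ds ≥ C(‖u‖ t - t²/2)`; in particular
`t ↦ F₂(ψ(t))` is strictly decreasing. -/
theorem quadratic_form_decreases_along_flow {H : Type*}
    [NormedAddCommGroup H] [InnerProductSpace ℝ H] [CompleteSpace H]
    (A : H →L[ℝ] H) (hsa : ∀ u v : H, ⟪A u, v⟫ = ⟪u, A v⟫)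
    (C : ℝ) (hC : 0 < C) (hinv : ∀ ψ : H, C * ‖ψ‖ ≤ ‖A ψ‖)
    (u : H) (hu : u ≠ 0) (ψ : ℝ → H) (hψ0 : ψ 0 = u)
    (hflow : ∀ s : ℝ, |s| < ‖u‖ → HasDerivAt ψ (-(‖A (ψ s)‖⁻¹ • A (ψ s))) s) :
    (∀ t : ℝ, 0 ≤ t → t < ‖u‖ →
      ((1/2 : ℝ) * ⟪A u, u⟫ - (1/2 : ℝ) * ⟪A (ψ t), ψ t⟫ =
        ∫ s in (0:ℝ)..t, ‖A (ψ s)‖) ∧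
      C * (‖u‖ * t - t^2 / 2) ≤ ∫ s in (0:ℝ)..t, ‖A (ψ s)‖) ∧
    (∀ t₁ t₂ : ℝ, 0 ≤ t₁ → t₁ < t₂ → t₂ < ‖u‖ →
      (1/2 : ℝ) * ⟪A (ψ t₂), ψ t₂⟫ < (1/2 : ℝ) * ⟪A (ψ t₁), ψ t₁⟫) :=
  quadratic_form_decreases_along_flow_general A hsa C hC hinv u ψ hψ0 hflow
end

section
/- On a conformally standard stationary spacetime (M₀×ℝ, g) with g(x,t)[(y,τ),(y,τ)] = g̃₀(x)[y,y] + 2g̃₀(x)[δ(x),y]τ - τ², a smooth curve s ↦ (x(s),t(s)) with ẋ(s) ≠ 0 is lightlike and future-pointing (ṫ > 0) if and only if ṫ(s) = sqrt( g̃₀(x)[ẋ,ẋ] + g̃₀(x)[δ(x),ẋ]² ) + g̃₀(x)[δ(x),ẋ], i.e., ṫ = F(x,ẋ) where F is the Fermat metric. -/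
open RealInnerProductSpace

/-- Fiberwise characterization of future-pointing lightlike directions in a
conformally standard stationary spacetime (with `g̃₀` realized as the inner
product of `V` and `δ ∈ V`): for `y ≠ 0`, the pair `(y,τ)` is lightlike with
`τ > 0` if and only if `τ = sqrt(⟨y,y⟩ + ⟨δ,y⟩²) + ⟨δ,y⟩`, i.e. `τ = F(y)` where
`F` is the Fermat metric. -/
theorem lightlike_futurepointing_iff_fermat {V : Type*}
    [NormedAddCommGroup V] [InnerProductSpace ℝ V]
    (δ y : V) (hy : y ≠ 0) (τ : ℝ) :
    (⟪y, y⟫ + 2 * ⟪δ, y⟫ * τ - τ^2 = 0 ∧ 0 < τ) ↔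
    τ = Real.sqrt (⟪y, y⟫ + ⟪δ, y⟫^2) + ⟪δ, y⟫ := by
  set a := ⟪y, y⟫ with ha_def
  set b := ⟪δ, y⟫ with hb_def
  have ha : 0 < a :=
    lt_of_le_of_ne real_inner_self_nonneg
      (fun h => hy (inner_self_eq_zero.mp h.symm))
  have hab : 0 ≤ a + b ^ 2 := by positivity
  have hsq : Real.sqrt (a + b ^ 2) ^ 2 = a + b ^ 2 := Real.sq_sqrt hab
  have hgt : -b < Real.sqrt (a + b ^ 2) := by
    rcases le_or_gt (-b) 0 with h | h
    · exact lt_of_le_of_lt h (Real.sqrt_pos.mpr (by positivity))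
    · have : (-b) ^ 2 < a + b ^ 2 := by nlinarith
      calc -b = Real.sqrt ((-b) ^ 2) := by
              rw [Real.sqrt_sq h.le]
        _ < Real.sqrt (a + b ^ 2) := Real.sqrt_lt_sqrt (by positivity) this
  constructor
  · rintro ⟨heq, hpos⟩
    have h1 : (τ - b) ^ 2 = a + b ^ 2 := by nlinarith
    have h2 : (τ - b - Real.sqrt (a + b ^ 2)) * (τ - b + Real.sqrt (a + b ^ 2)) = 0 := by
      nlinarith [hsq]
    rcases mul_eq_zero.mp h2 with h | h
    · linarith
    · exfalso; nlinarith
  · intro h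
    subst h
    constructor
    · nlinarith [hsq]
    · linarith
end

section
/- Let x: [0,1] → M₀ be a curve satisfying ∇̄_{ẋ}ẋ = -C Ω[ẋ] with Ω α-skew-symmetric, and let J be a vector field along x satisfying the linearized equation J'' = -R(J,ẋ)ẋ - c₀ Ω[ẋ] - C(∇̄_J Ω)[ẋ] - C Ω[J'] where c₀ is a constant and ∇̄_J Ω is skew-symmetric. Then the function s ↦ α(x(s))[ẋ(s), J'(s)] is constant along x. -/
open RealInnerProductSpace

/-- Along a curve `x` satisfying `x'' = -C Ω[x']` with `Ω` skew-symmetric, if `J`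
satisfies the linearized equation
`J'' = -R(J,ẋ)ẋ - c₀ Ω[ẋ] - C (∇̄_J Ω)[ẋ] - C Ω[J']`
with `∇̄_J Ω` skew-symmetric and the curvature term `R(J,ẋ)ẋ` orthogonal to `ẋ`,
then `s ↦ ⟨ẋ(s), J'(s)⟩` is constant. -/
theorem inner_velocity_jacobi_derivative_constant {V : Type*}
    [NormedAddCommGroup V] [InnerProductSpace ℝ V]
    (C c₀ : ℝ) (Ω ΩJ : ℝ → V →L[ℝ] V)
    (hΩ : ∀ (s : ℝ) (v w : V), ⟪Ω s v, w⟫ = -⟪v, Ω s w⟫)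
    (hΩJ : ∀ (s : ℝ) (v w : V), ⟪ΩJ s v, w⟫ = -⟪v, ΩJ s w⟫)
    (x x' x'' J J' J'' Rc : ℝ → V)
    (hx : ∀ s, HasDerivAt x (x' s) s) (hx' : ∀ s, HasDerivAt x' (x'' s) s)
    (hgeo : ∀ s, x'' s = -C • Ω s (x' s))
    (hJ : ∀ s, HasDerivAt J (J' s) s) (hJ' : ∀ s, HasDerivAt J' (J'' s) s)
    (hR : ∀ s, ⟪Rc s, x' s⟫ = 0)
    (hjacobi : ∀ s, J'' s = -Rc s - c₀ • Ω s (x' s) - C • ΩJ s (x' s) - C • Ω s (J' s)) :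
    ∀ s t : ℝ, ⟪x' s, J' s⟫ = ⟪x' t, J' t⟫ := by
  have key : ∀ s : ℝ, HasDerivAt (fun u => ⟪x' u, J' u⟫) 0 s := by
    intro s
    have h := (hx' s).inner ℝ (hJ' s)
    have hzero : (⟪x' s, J'' s⟫ + ⟪x'' s, J' s⟫ : ℝ) = 0 := by
      rw [hjacobi s, hgeo s]
      have h1 : (⟪x' s, Rc s⟫ : ℝ) = 0 := by rw [real_inner_comm]; exact hR s
      have h2 : (⟪x' s, Ω s (x' s)⟫ : ℝ) = 0 := by
        linarith [hΩ s (x' s) (x' s), real_inner_comm (x' s) (Ω s (x' s))]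
      have h3 : (⟪x' s, ΩJ s (x' s)⟫ : ℝ) = 0 := by
        linarith [hΩJ s (x' s) (x' s), real_inner_comm (x' s) (ΩJ s (x' s))]
      have h4 : (⟪x' s, Ω s (J' s)⟫ : ℝ) = -⟪Ω s (x' s), J' s⟫ := by
        linarith [hΩ s (x' s) (J' s)]
      simp only [inner_sub_right, inner_smul_right, inner_neg_right, inner_smul_left, neg_smul, inner_neg_left]
      rw [h1, h2, h3, h4]
      simp only [starRingEnd_apply, star_trivial]
      ring
    rw [hzero] at h
    exact h
  exact is_const_of_deriv_eq_zero (fun u => (key u).differentiableAt)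
    (fun u => (key u).deriv)
end
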